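/- Let n be a positive integer and let p be a real polynomial of degree at most n satisfying p(1) = 1. Then max_{x ∈ [-1,1]} (1-x)·p(x)² = 2/(2n+1)² holds if and only if p = h_n, where h_n(x) = (1/(2n+1))·(1 + 2·∑_{k=1}^{n} T_k(x)). -/

import Mathlib

/-!
On `x = cos ξ` one has `(1 - x) h_n(x)² = 2 sin²((2n + 1)ξ / 2) / (2n + 1)²`, because
`sin (ξ / 2) · (1 + 2 ∑ cos (kξ)) = sin ((2n + 1)ξ / 2)`. So the bound `2 / (2n + 1)²` holds
for `h_n` and is attained exactly at the `n + 1` nodes `x_j = cos ((2j + 1)π / (2n + 1))`,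
where `h_n(x_j)` has sign `(-1)^j`. The Lagrange weights `ℓ_j(1)` of these nodes have the
same sign, so if `p` also satisfies the bound then `|p(x_j)| ≤ |h_n(x_j)|` and
`1 = p(1) = ∑ p(x_j) ℓ_j(1) ≤ ∑ h_n(x_j) ℓ_j(1) = h_n(1) = 1`; equality forces
`p(x_j) = h_n(x_j)` for all `j`, hence `p = h_n`.
-/

open Polynomial Finset Real

namespace Lagrange

variable {F : Type*} [Field F] [LinearOrder F] [IsStrictOrderedRing F]

theorem neg_one_pow_mul_eval_basis_pos {n : ℕ} {v : Fin n → F} (hv : StrictAnti v) {x : F}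
    (hx : ∀ i, v i < x) (j : Fin n) :
    0 < (-1) ^ (j : ℕ) * (Lagrange.basis univ v j).eval x := by
  have hsign : (-1 : F) ^ (j : ℕ) = ∏ i ∈ univ.erase j, if i < j then -1 else 1 := by
    rw [prod_ite, prod_const_one, mul_one, prod_const, filter_erase,
      erase_eq_of_notMem (by simp), filter_gt_eq_Iio, Fin.card_Iio]
  rw [hsign, Lagrange.basis, eval_prod, ← prod_mul_distrib]
  refine prod_pos fun i hi => ?_
  have hxi := sub_pos.2 (hx i)
  simp only [basisDivisor, eval_mul, eval_C, eval_sub, eval_X]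
  rcases lt_or_gt_of_ne (ne_of_mem_erase hi) with hij | hij
  · rw [if_pos hij, neg_one_mul, neg_pos]
    exact mul_neg_of_neg_of_pos (inv_lt_zero.2 (sub_neg.2 (hv hij))) hxi
  · rw [if_neg hij.not_gt, one_mul]
    exact mul_pos (inv_pos.2 (sub_pos.2 (hv hij))) hxi

theorem eq_of_abs_eval_le_of_eval_eq {ι : Type*} [DecidableEq ι] {s : Finset ι} {v : ι → F}
    (hvs : Set.InjOn v s) {p q : F[X]} (hp : p.degree < #s) (hq : q.degree < #s) {x : F}
    (hqx : ∀ i ∈ s, 0 < q.eval (v i) * (Lagrange.basis s v i).eval x)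
    (hle : ∀ i ∈ s, |p.eval (v i)| ≤ |q.eval (v i)|) (hpqx : p.eval x = q.eval x) :
    p = q := by
  have hinterp (f : F[X]) (hf : f.degree < #s) :
      f.eval x = ∑ i ∈ s, f.eval (v i) * (Lagrange.basis s v i).eval x := by
    conv_lhs => rw [eq_interpolate hvs hf]
    simp [interpolate_apply, eval_finsetSum]
  have hterm : ∀ i ∈ s, p.eval (v i) * (Lagrange.basis s v i).eval x ≤
      q.eval (v i) * (Lagrange.basis s v i).eval x := fun i hi =>
    calc _ ≤ |p.eval (v i)| * |(Lagrange.basis s v i).eval x| := by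
          rw [← abs_mul]; exact le_abs_self _
      _ ≤ |q.eval (v i)| * |(Lagrange.basis s v i).eval x| :=
          mul_le_mul_of_nonneg_right (hle i hi) (abs_nonneg _)
      _ = _ := by rw [← abs_mul, abs_of_pos (hqx i hi)]
  have hsum := (sum_eq_sum_iff_of_le hterm).1 (by rw [← hinterp p hp, ← hinterp q hq, hpqx])
  refine eq_of_degrees_lt_of_eval_index_eq s hvs hp hq fun i hi => ?_
  exact mul_right_cancel₀ (right_ne_zero_of_mul (hqx i hi).ne') (hsum i hi)

end Lagrange

theorem sin_half_mul_one_add_two_mul_sum_cos (n : ℕ) (ξ : ℝ) :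
    sin (ξ / 2) * (1 + 2 * ∑ k ∈ Icc 1 n, cos (k * ξ)) = sin ((2 * n + 1) * ξ / 2) := by
  induction n with
  | zero => simp
  | succ m ih =>
    have hsin : sin ((2 * (m + 1 : ℝ) + 1) * ξ / 2) =
        sin ((2 * m + 1) * ξ / 2) + 2 * sin (ξ / 2) * cos ((m + 1) * ξ) := by
      rw [show (2 * (m + 1 : ℝ) + 1) * ξ / 2 = (m + 1) * ξ + ξ / 2 by ring,
        show (2 * m + 1) * ξ / 2 = (m + 1) * ξ - ξ / 2 by ring, sin_add, sin_sub]
      ring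
    rw [sum_Icc_succ_top (by omega), Nat.cast_succ, hsin, ← ih]
    ring

/-- The polynomial `h_n`: on `x = cos ξ` it is the Dirichlet kernel `D_n(ξ)` over `2n + 1`. -/
noncomputable def dirichletPoly (n : ℕ) : ℝ[X] :=
  C ((2 * (n : ℝ) + 1)⁻¹) * (1 + 2 * ∑ k ∈ Icc 1 n, Chebyshev.T ℝ (k : ℤ))

namespace dirichletPoly

theorem natDegree_le (n : ℕ) : (dirichletPoly n).natDegree ≤ n := by
  refine (natDegree_C_mul_le _ _).trans <| (natDegree_add_le _ _).trans <|
    max_le (by simp) <| natDegree_mul_le.trans ?_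
  have hT : ∀ k ∈ Icc 1 n, (Chebyshev.T ℝ (k : ℤ)).natDegree ≤ n := fun k hk => by
    simpa [Chebyshev.natDegree_T] using (mem_Icc.1 hk).2
  simpa using natDegree_sum_le_of_forall_le _ _ hT

theorem eval_one (n : ℕ) : (dirichletPoly n).eval 1 = 1 := by
  have : (2 * (n : ℝ) + 1) ≠ 0 := by positivity
  simp only [dirichletPoly, eval_mul, eval_C, eval_add, Polynomial.eval_one, eval_ofNat,
    eval_finsetSum, Chebyshev.T_eval_one, sum_const, Nat.card_Icc, add_tsub_cancel_right,
    nsmul_eq_mul, mul_one]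
  field_simp
  ring

theorem sin_half_mul_eval_cos (n : ℕ) (ξ : ℝ) :
    sin (ξ / 2) * (dirichletPoly n).eval (cos ξ) = sin ((2 * n + 1) * ξ / 2) / (2 * n + 1) := by
  rw [← sin_half_mul_one_add_two_mul_sum_cos]
  simp only [dirichletPoly, eval_mul, eval_C, eval_add, Polynomial.eval_one, eval_ofNat,
    eval_finsetSum, Chebyshev.T_real_cos, Int.cast_natCast]
  ring

theorem one_sub_cos_mul_eval_cos_sq (n : ℕ) (ξ : ℝ) :
    (1 - cos ξ) * (dirichletPoly n).eval (cos ξ) ^ 2 =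
      2 * sin ((2 * n + 1) * ξ / 2) ^ 2 / (2 * n + 1) ^ 2 := by
  have h : 1 - cos ξ = 2 * sin (ξ / 2) ^ 2 := by
    rw [sin_sq_eq_half_sub, show 2 * (ξ / 2) = ξ by ring]; ring
  rw [h, mul_assoc, ← mul_pow, sin_half_mul_eval_cos, div_pow]
  ring

theorem one_sub_mul_eval_sq_le (n : ℕ) {x : ℝ} (hx : x ∈ Set.Icc (-1) 1) :
    (1 - x) * (dirichletPoly n).eval x ^ 2 ≤ 2 / (2 * n + 1) ^ 2 := by
  rw [← cos_arccos hx.1 hx.2, one_sub_cos_mul_eval_cos_sq]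
  gcongr
  simpa using sin_sq_le_one ((2 * n + 1) * arccos x / 2)

end dirichletPoly

noncomputable def dirichletAngle (n : ℕ) (j : Fin (n + 1)) : ℝ := (2 * j + 1) * π / (2 * n + 1)

theorem dirichletAngle_pos (n : ℕ) (j : Fin (n + 1)) : 0 < dirichletAngle n j := by
  unfold dirichletAngle; positivity

theorem dirichletAngle_le_pi (n : ℕ) (j : Fin (n + 1)) : dirichletAngle n j ≤ π := by
  have hj : (j : ℝ) ≤ n := mod_cast Nat.lt_succ_iff.1 j.2
  rw [dirichletAngle, div_le_iff₀ (by positivity)]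
  nlinarith [pi_pos]

theorem dirichletAngle_strictMono (n : ℕ) : StrictMono (dirichletAngle n) := by
  intro i j hij
  have hij : (i : ℝ) < j := mod_cast hij
  unfold dirichletAngle
  gcongr

theorem sin_mul_dirichletAngle (n : ℕ) (j : Fin (n + 1)) :
    sin ((2 * n + 1) * dirichletAngle n j / 2) = (-1) ^ (j : ℕ) := by
  rw [← cos_nat_mul_pi, ← sin_add_pi_div_two, dirichletAngle]
  congr 1
  field_simp

theorem cos_dirichletAngle_strictAnti (n : ℕ) : StrictAnti fun j => cos (dirichletAngle n j) :=
  fun _ _ hij => strictAntiOn_cos ⟨(dirichletAngle_pos n _).le, dirichletAngle_le_pi n _⟩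
    ⟨(dirichletAngle_pos n _).le, dirichletAngle_le_pi n _⟩ (dirichletAngle_strictMono n hij)

theorem cos_dirichletAngle_lt_one (n : ℕ) (j : Fin (n + 1)) : cos (dirichletAngle n j) < 1 := by
  simpa using strictAntiOn_cos (Set.left_mem_Icc.2 pi_pos.le)
    ⟨(dirichletAngle_pos n j).le, dirichletAngle_le_pi n j⟩ (dirichletAngle_pos n j)

namespace dirichletPoly

theorem one_sub_cos_dirichletAngle_mul_eval_sq (n : ℕ) (j : Fin (n + 1)) :
    (1 - cos (dirichletAngle n j)) * (dirichletPoly n).eval (cos (dirichletAngle n j)) ^ 2 =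
      2 / (2 * n + 1) ^ 2 := by
  rw [one_sub_cos_mul_eval_cos_sq, sin_mul_dirichletAngle, ← pow_mul, pow_mul', neg_one_sq,
    one_pow, mul_one]

theorem neg_one_pow_mul_eval_cos_dirichletAngle_pos (n : ℕ) (j : Fin (n + 1)) :
    0 < (-1) ^ (j : ℕ) * (dirichletPoly n).eval (cos (dirichletAngle n j)) := by
  have hsin : 0 < sin (dirichletAngle n j / 2) :=
    sin_pos_of_pos_of_lt_pi (half_pos (dirichletAngle_pos n j))
      (by linarith [dirichletAngle_le_pi n j, pi_pos])
  refine pos_of_mul_pos_right ?_ hsin.le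
  rw [mul_left_comm, sin_half_mul_eval_cos, sin_mul_dirichletAngle, ← mul_div_assoc, ← mul_pow,
    neg_one_mul, neg_neg, one_pow]
  positivity

theorem eval_cos_dirichletAngle_mul_eval_basis_pos (n : ℕ) (j : Fin (n + 1)) :
    0 < (dirichletPoly n).eval (cos (dirichletAngle n j)) *
      (Lagrange.basis univ (fun i => cos (dirichletAngle n i)) j).eval 1 := by
  have h := mul_pos (neg_one_pow_mul_eval_cos_dirichletAngle_pos n j)
    (Lagrange.neg_one_pow_mul_eval_basis_pos (cos_dirichletAngle_strictAnti n)
      (cos_dirichletAngle_lt_one n) j)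
  rwa [mul_mul_mul_comm, ← mul_pow, neg_one_mul, neg_neg, one_pow, one_mul] at h

theorem isGreatest_image_one_sub_mul_eval_sq (n : ℕ) :
    IsGreatest ((fun x : ℝ => (1 - x) * (dirichletPoly n).eval x ^ 2) '' Set.Icc (-1) 1)
      (2 / (2 * (n : ℝ) + 1) ^ 2) :=
  ⟨⟨cos (dirichletAngle n 0), ⟨neg_one_le_cos _, cos_le_one _⟩,
      one_sub_cos_dirichletAngle_mul_eval_sq n 0⟩,
    by rintro _ ⟨x, hx, rfl⟩; exact one_sub_mul_eval_sq_le n hx⟩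

end dirichletPoly

theorem dirichlet_square_equality_case
    (n : ℕ) (p : Polynomial ℝ)
    (hdeg : p.natDegree ≤ n)
    (hone : p.eval 1 = 1) :
    sSup ((fun x : ℝ => (1 - x) * p.eval x ^ 2) '' Set.Icc (-1 : ℝ) 1) =
        2 / (2 * (n : ℝ) + 1) ^ 2 ↔
      p = Polynomial.C ((2 * (n : ℝ) + 1)⁻¹) *
            (1 + 2 * ∑ k ∈ Finset.Icc 1 n, Polynomial.Chebyshev.T ℝ (k : ℤ)) := by
  change _ ↔ p = dirichletPoly n
  constructor
  · intro hsup
    have hbdd : BddAbove ((fun x : ℝ => (1 - x) * p.eval x ^ 2) '' Set.Icc (-1) 1) :=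
      (isCompact_Icc.image (by fun_prop)).bddAbove
    have hle (j : Fin (n + 1)) : |p.eval (cos (dirichletAngle n j))| ≤
        |(dirichletPoly n).eval (cos (dirichletAngle n j))| := by
      have h := hsup ▸
        le_csSup hbdd ⟨_, ⟨neg_one_le_cos (dirichletAngle n j), cos_le_one _⟩, rfl⟩
      rw [← dirichletPoly.one_sub_cos_dirichletAngle_mul_eval_sq n j] at h
      exact sq_le_sq.1 (le_of_mul_le_mul_left h (sub_pos.2 (cos_dirichletAngle_lt_one n j)))
    have hdeg_lt {q : ℝ[X]} (hq : q.natDegree ≤ n) :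
        q.degree < #(univ : Finset (Fin (n + 1))) := by
      rw [card_univ, Fintype.card_fin, Nat.cast_withBot]
      exact degree_le_natDegree.trans_lt (WithBot.coe_lt_coe.2 (Nat.lt_succ_of_le hq))
    exact Lagrange.eq_of_abs_eval_le_of_eval_eq (cos_dirichletAngle_strictAnti n).injective.injOn
      (hdeg_lt hdeg) (hdeg_lt (dirichletPoly.natDegree_le n))
      (fun j _ => dirichletPoly.eval_cos_dirichletAngle_mul_eval_basis_pos n j) (fun j _ => hle j)
      (by rw [hone, dirichletPoly.eval_one])
  · rintro rfl
    exact (dirichletPoly.isGreatest_image_one_sub_mul_eval_sq n).csSup_eq
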